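/- Let G be a connected graph on at least three vertices and H a connected graph containing E_3 (a path x_1, x_2, x_3 with a loop at x_1) as a subgraph. If G or H contains the star S_3 (one center adjacent to three leaves, i.e. K_{1,3}) as a subgraph, then G × H contains K_{2,3} as a subgraph and hence is not a median graph. -/
import Mathlib


/-- A graph allowing loops: a symmetric adjacency relation on `V`. -/
structure LoopGraph (V : Type) where
  Adj : V → V → Prop
  symm : ∀ {u v : V}, Adj u v → Adj v u

namespace LoopGraph

variable {V W : Type}

/-- `Walk G u v n` : there is a walk of length `n` from `u` to `v` in `G`. -/
inductive Walk (G : LoopGraph V) : V → V → ℕ → Prop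
  | nil (u : V) : Walk G u u 0
  | cons {u w v : V} {n : ℕ} : G.Adj u w → Walk G w v n → Walk G u v (n + 1)

def Connected (G : LoopGraph V) : Prop := ∀ u v : V, ∃ n : ℕ, G.Walk u v n

/-- Distance: the length of a shortest walk. -/
noncomputable def dist (G : LoopGraph V) (u v : V) : ℕ := sInf {n : ℕ | G.Walk u v n}

/-- `m` lies on a geodesic from `a` to `b`. -/
def Between (G : LoopGraph V) (a m b : V) : Prop :=
  G.dist a m + G.dist m b = G.dist a b

/-- `m` is a median of the triple `a, b, c`. -/
def MedianOf (G : LoopGraph V) (m a b c : V) : Prop :=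
  G.Between a m b ∧ G.Between a m c ∧ G.Between b m c

/-- A median graph: connected, loopless, and every triple of vertices has a
unique median. -/
def IsMedian (G : LoopGraph V) : Prop :=
  (∀ v : V, ¬ G.Adj v v) ∧ G.Connected ∧
    ∀ a b c : V, ∃! m : V, G.MedianOf m a b c

/-- The direct (tensor) product of two graphs with loops. -/
def tensor (G : LoopGraph V) (H : LoopGraph W) : LoopGraph (V × W) where
  Adj p q := G.Adj p.1 q.1 ∧ H.Adj p.2 q.2
  symm h := ⟨G.symm h.1, H.symm h.2⟩

def Bipartite (G : LoopGraph V) : Prop :=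
  ∃ c : V → Bool, ∀ {u v : V}, G.Adj u v → c u ≠ c v

/-- `G` contains `K_{2,3}` as a (not necessarily induced) subgraph. -/
def ContainsK23 (G : LoopGraph V) : Prop :=
  ∃ f : Fin 2 ⊕ Fin 3 → V, Function.Injective f ∧
    ∀ (a : Fin 2) (b : Fin 3), G.Adj (f (Sum.inl a)) (f (Sum.inr b))

end LoopGraph

/-- The path graph on `k` vertices, as a loop graph (no loops). -/
def pathLG (k : ℕ) : LoopGraph (Fin k) where
  Adj i j := i.val + 1 = j.val ∨ j.val + 1 = i.val
  symm h := h.symm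

/-- `E_l`: the path on `l` vertices `x_1, …, x_l` with a loop at the end vertex `x_1`. -/
def ELoopPath (l : ℕ) : LoopGraph (Fin l) where
  Adj i j := i.val + 1 = j.val ∨ j.val + 1 = i.val ∨ (i.val = 0 ∧ j.val = 0)
  symm h := by tauto

/-- `G` contains the star `S₃ = K_{1,3}` as a subgraph. -/
def LoopGraph.ContainsS3 {V : Type} (G : LoopGraph V) : Prop :=
  ∃ c a b d : V, c ≠ a ∧ c ≠ b ∧ c ≠ d ∧ a ≠ b ∧ a ≠ d ∧ b ≠ d ∧
    G.Adj c a ∧ G.Adj c b ∧ G.Adj c d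


section Aux
namespace LoopGraph
variable {V : Type} {G : LoopGraph V}

lemma walk_zero {u v : V} (h : G.Walk u v 0) : u = v := by
  cases h; rfl

lemma walk_one {u v : V} (h : G.Walk u v 1) : G.Adj u v := by
  cases h with
  | cons ha ht => cases ht; exact ha

lemma dist_mem (hc : G.Connected) (u v : V) : G.Walk u v (G.dist u v) :=
  Nat.sInf_mem (hc u v)

lemma dist_le {u v : V} {n : ℕ} (h : G.Walk u v n) : G.dist u v ≤ n :=
  Nat.sInf_le h

lemma eq_of_dist_eq_zero (hc : G.Connected) {u v : V} (h : G.dist u v = 0) :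
    u = v := by
  have := dist_mem hc u v
  rw [h] at this
  exact walk_zero this

lemma dist_eq_one (hc : G.Connected) {u v : V} (hne : u ≠ v) (h : G.Adj u v) :
    G.dist u v = 1 := by
  have h1 : G.dist u v ≤ 1 := dist_le (Walk.cons h (Walk.nil v))
  have h0 : G.dist u v ≠ 0 := fun h0 => hne (eq_of_dist_eq_zero hc h0)
  omega

lemma dist_eq_two (hc : G.Connected) {u v w : V} (hne : u ≠ v) (hna : ¬ G.Adj u v)
    (h1 : G.Adj u w) (h2 : G.Adj w v) : G.dist u v = 2 := by
  have hle : G.dist u v ≤ 2 := dist_le (Walk.cons h1 (Walk.cons h2 (Walk.nil v)))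
  have h0 : G.dist u v ≠ 0 := fun h0 => hne (eq_of_dist_eq_zero hc h0)
  have hone : G.dist u v ≠ 1 := by
    intro hh
    have := dist_mem hc u v
    rw [hh] at this
    exact hna (walk_one this)
  omega

/-- In a median graph there is no triangle. -/
lemma no_triangle (hM : G.IsMedian) {a b c : V}
    (hab : a ≠ b) (hbc : b ≠ c) (hac : a ≠ c)
    (h1 : G.Adj a b) (h2 : G.Adj b c) (h3 : G.Adj a c) : False := by
  obtain ⟨_, hc, huniq⟩ := hM
  obtain ⟨m, ⟨hm1, hm2, hm3⟩, -⟩ := huniq a b c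
  have dab : G.dist a b = 1 := dist_eq_one hc hab h1
  have dbc : G.dist b c = 1 := dist_eq_one hc hbc h2
  have dac : G.dist a c = 1 := dist_eq_one hc hac h3
  unfold LoopGraph.Between at hm1 hm2 hm3
  rw [dab] at hm1; rw [dac] at hm2; rw [dbc] at hm3
  have e1 : m = a ∨ m = b := by
    have h : G.dist a m = 0 ∨ G.dist m b = 0 := by omega
    rcases h with h | h
    · exact Or.inl (eq_of_dist_eq_zero hc h).symm
    · exact Or.inr (eq_of_dist_eq_zero hc h)
  have e2 : m = a ∨ m = c := by
    have h : G.dist a m = 0 ∨ G.dist m c = 0 := by omega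
    rcases h with h | h
    · exact Or.inl (eq_of_dist_eq_zero hc h).symm
    · exact Or.inr (eq_of_dist_eq_zero hc h)
  have e3 : m = b ∨ m = c := by
    have h : G.dist b m = 0 ∨ G.dist m c = 0 := by omega
    rcases h with h | h
    · exact Or.inl (eq_of_dist_eq_zero hc h).symm
    · exact Or.inr (eq_of_dist_eq_zero hc h)
  rcases e1 with rfl | rfl
  · rcases e3 with rfl | rfl
    · exact hab rfl
    · exact hac rfl
  · rcases e2 with rfl | rfl
    · exact hab rfl
    · exact hbc rfl

/-- A graph containing `K_{2,3}` is not a median graph. -/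
lemma not_isMedian_of_containsK23 (hK : G.ContainsK23) : ¬ G.IsMedian := by
  intro hM
  obtain ⟨f, hinj, hadj⟩ := hK
  set u1 := f (Sum.inl 0) with hu1
  set u2 := f (Sum.inl 1) with hu2
  set v1 := f (Sum.inr 0) with hv1
  set v2 := f (Sum.inr 1) with hv2
  set v3 := f (Sum.inr 2) with hv3
  have ne : ∀ x y : Fin 2 ⊕ Fin 3, x ≠ y → f x ≠ f y := by
    intro x y hxy h
    exact hxy (hinj h)
  have nu : u1 ≠ u2 := ne _ _ (by simp)
  have n12 : v1 ≠ v2 := ne _ _ (by simp)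
  have n13 : v1 ≠ v3 := ne _ _ (by simp)
  have n23 : v2 ≠ v3 := ne _ _ (by simp)
  have nuv : ∀ (a : Fin 2) (b : Fin 3), f (Sum.inl a) ≠ f (Sum.inr b) :=
    fun a b => ne _ _ (by simp)
  have a11 : G.Adj u1 v1 := hadj 0 0
  have a12 : G.Adj u1 v2 := hadj 0 1
  have a13 : G.Adj u1 v3 := hadj 0 2
  have a21 : G.Adj u2 v1 := hadj 1 0
  have a22 : G.Adj u2 v2 := hadj 1 1
  have a23 : G.Adj u2 v3 := hadj 1 2
  by_cases e12 : G.Adj v1 v2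
  · exact no_triangle hM n12 (nuv 0 1).symm (nuv 0 0).symm e12 (G.symm a12) (G.symm a11)
  by_cases e13 : G.Adj v1 v3
  · exact no_triangle hM n13 (nuv 0 2).symm (nuv 0 0).symm e13 (G.symm a13) (G.symm a11)
  by_cases e23 : G.Adj v2 v3
  · exact no_triangle hM n23 (nuv 0 2).symm (nuv 0 1).symm e23 (G.symm a13) (G.symm a12)
  obtain ⟨-, hc, huniq⟩ := hM
  have d12 : G.dist v1 v2 = 2 := dist_eq_two hc n12 e12 (G.symm a11) a12
  have d13 : G.dist v1 v3 = 2 := dist_eq_two hc n13 e13 (G.symm a11) a13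
  have d23 : G.dist v2 v3 = 2 := dist_eq_two hc n23 e23 (G.symm a12) a13
  have med : ∀ u : V, G.Adj u v1 → G.Adj u v2 → G.Adj u v3 →
      u ≠ v1 → u ≠ v2 → u ≠ v3 → G.MedianOf u v1 v2 v3 := by
    intro u h1 h2 h3 m1 m2 m3
    have du1 : G.dist v1 u = 1 := dist_eq_one hc (Ne.symm m1) (G.symm h1)
    have du2 : G.dist v2 u = 1 := dist_eq_one hc (Ne.symm m2) (G.symm h2)
    have dv2 : G.dist u v2 = 1 := dist_eq_one hc m2 h2
    have dv3 : G.dist u v3 = 1 := dist_eq_one hc m3 h3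
    refine ⟨?_, ?_, ?_⟩ <;> unfold LoopGraph.Between <;> omega
  obtain ⟨m, -, hun⟩ := huniq v1 v2 v3
  have q1 : u1 = m := hun u1 (med u1 a11 a12 a13 (nuv 0 0) (nuv 0 1) (nuv 0 2))
  have q2 : u2 = m := hun u2 (med u2 a21 a22 a23 (nuv 1 0) (nuv 1 1) (nuv 1 2))
  exact nu (q1.trans q2.symm)

/-- A connected graph with three distinct vertices has a vertex with two
distinct neighbours. -/
lemma exists_two_neighbors (hc : G.Connected)
    (hV : ∃ a b c : V, a ≠ b ∧ b ≠ c ∧ a ≠ c) :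
    ∃ g g1 g2 : V, g1 ≠ g2 ∧ G.Adj g g1 ∧ G.Adj g g2 := by
  by_contra hcon
  push_neg at hcon
  have key : ∀ g g1 g2 : V, G.Adj g g1 → G.Adj g g2 → g1 = g2 := by
    intro g g1 g2 h1 h2
    by_contra hne
    exact (hcon g g1 g2 hne h1) h2
  have reach : ∀ (u v : V) (n : ℕ), G.Walk u v n → v = u ∨ G.Adj u v := by
    intro u v n h
    induction h with
    | nil w => exact Or.inl rfl
    | cons ha ht ih =>
      rcases ih with rfl | hadj
      · exact Or.inr ha
      · exact Or.inl (key _ _ _ hadj (G.symm ha))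
  obtain ⟨a, b, c, hab, hbc, hac⟩ := hV
  obtain ⟨n1, w1⟩ := hc a b
  obtain ⟨n2, w2⟩ := hc a c
  rcases reach a b n1 w1 with rfl | h1
  · exact hab rfl
  rcases reach a c n2 w2 with rfl | h2
  · exact hac rfl
  exact hbc (key a b c h1 h2)

/-- Build `K_{2,3}` from explicit vertices. -/
lemma containsK23_of {u1 u2 v1 v2 v3 : V}
    (hu : u1 ≠ u2) (h12 : v1 ≠ v2) (h13 : v1 ≠ v3) (h23 : v2 ≠ v3)
    (huv : ∀ i ∈ [u1, u2], ∀ j ∈ [v1, v2, v3], i ≠ j)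
    (a11 : G.Adj u1 v1) (a12 : G.Adj u1 v2) (a13 : G.Adj u1 v3)
    (a21 : G.Adj u2 v1) (a22 : G.Adj u2 v2) (a23 : G.Adj u2 v3) :
    G.ContainsK23 := by
  refine ⟨Sum.elim ![u1, u2] ![v1, v2, v3], ?_, ?_⟩
  · intro x y hxy
    simp only [List.mem_cons, List.mem_singleton, List.not_mem_nil] at huv
    rcases x with a | a <;> rcases y with b | b <;> fin_cases a <;> fin_cases b <;>
      simp_all [Matrix.cons_val_zero, Matrix.cons_val_one] <;>
      first
        | rfl
        | (exact absurd hxy (huv _ (by tauto) _ (by tauto)))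
        | (exact absurd hxy.symm (huv _ (by tauto) _ (by tauto)))
  · intro a b
    fin_cases a <;> fin_cases b <;> simpa

end LoopGraph
end Aux

/-- If `G` is connected with at least three vertices, `H` is connected and
contains `E₃` (a path `x₁, x₂, x₃` with a loop at `x₁`) as a subgraph, and `G`
or `H` contains the star `S₃` as a subgraph, then `G × H` contains `K_{2,3}`
as a subgraph and hence is not a median graph. -/

theorem star_not_median {V W : Type} (G : LoopGraph V) (H : LoopGraph W)
    (hGc : G.Connected) (hHc : H.Connected)
    (hV : ∃ a b c : V, a ≠ b ∧ b ≠ c ∧ a ≠ c)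
    (hE3 : ∃ x₁ x₂ x₃ : W, x₁ ≠ x₂ ∧ x₂ ≠ x₃ ∧ x₁ ≠ x₃ ∧
      H.Adj x₁ x₁ ∧ H.Adj x₁ x₂ ∧ H.Adj x₂ x₃)
    (hstar : G.ContainsS3 ∨ H.ContainsS3) :
    (G.tensor H).ContainsK23 ∧ ¬ (G.tensor H).IsMedian := by
  have hK : (G.tensor H).ContainsK23 := by
    obtain ⟨x₁, x₂, x₃, hx12, hx23, hx13, hloop, h12, h23⟩ := hE3
    rcases hstar with ⟨c, a, b, d, hca, hcb, hcd, hab, had, hbd, Aa, Ab, Ad⟩ |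
        ⟨c, a, b, d, hca, hcb, hcd, hab, had, hbd, Aa, Ab, Ad⟩
    · -- G contains S₃ with center c, leaves a b d; use x₁, x₂, x₃ in H
      refine LoopGraph.containsK23_of (u1 := (c, x₁)) (u2 := (c, x₃))
        (v1 := (a, x₂)) (v2 := (b, x₂)) (v3 := (d, x₂)) ?_ ?_ ?_ ?_ ?_
        ⟨Aa, h12⟩ ⟨Ab, h12⟩ ⟨Ad, h12⟩ ⟨Aa, H.symm h23⟩ ⟨Ab, H.symm h23⟩ ⟨Ad, H.symm h23⟩
      · exact fun h => hx13 (congrArg Prod.snd h)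
      · exact fun h => hab (congrArg Prod.fst h)
      · exact fun h => had (congrArg Prod.fst h)
      · exact fun h => hbd (congrArg Prod.fst h)
      · intro i hi j hj h
        simp only [List.mem_cons, List.mem_singleton, List.not_mem_nil, or_false] at hi hj
        have h1 := congrArg Prod.fst h
        rcases hi with rfl | rfl <;> rcases hj with rfl | rfl | rfl <;> simp_all
    · -- H contains S₃ with center c, leaves a b d; need two neighbors in G
      obtain ⟨g, g1, g2, hg12, hgg1, hgg2⟩ := LoopGraph.exists_two_neighbors hGc hV
      refine LoopGraph.containsK23_of (u1 := (g1, c)) (u2 := (g2, c))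
        (v1 := (g, a)) (v2 := (g, b)) (v3 := (g, d)) ?_ ?_ ?_ ?_ ?_
        ⟨G.symm hgg1, Aa⟩ ⟨G.symm hgg1, Ab⟩ ⟨G.symm hgg1, Ad⟩
        ⟨G.symm hgg2, Aa⟩ ⟨G.symm hgg2, Ab⟩ ⟨G.symm hgg2, Ad⟩
      · exact fun h => hg12 (congrArg Prod.fst h)
      · exact fun h => hab (congrArg Prod.snd h)
      · exact fun h => had (congrArg Prod.snd h)
      · exact fun h => hbd (congrArg Prod.snd h)
      · intro i hi j hj h
        simp only [List.mem_cons, List.mem_singleton, List.not_mem_nil, or_false] at hi hj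
        have h2 := congrArg Prod.snd h
        rcases hi with rfl | rfl <;> rcases hj with rfl | rfl | rfl <;> simp_all
  exact ⟨hK, LoopGraph.not_isMedian_of_containsK23 hK⟩
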